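/- For k ≥ 1 and any pair (p, q) with (p, q) ≠ (k, k), the tropical cohomology with compact support H_c^{p,q}(T^k) of the tropical affine space T^k vanishes, and H_c^{k,k}(T^k) ≅ ℤ. -/

import Mathlib

open scoped DirectSum

namespace TropAffine

variable (k : ℕ)

/-- The faces of the cell structure `{𝕋, {∞}}^k` of tropical affine space `𝕋^k`:
a face of dimension `q` is a product of `𝕋`'s (on the complement of `U`) and
`{∞}`'s (on `U`), encoded by the set `U ⊆ [k]` with `|U| = k - q`. -/
def Idx (q : ℕ) := {U : Finset (Fin k) // U.card + q = k}

instance (q : ℕ) : Fintype (Idx k q) := by unfold Idx; infer_instance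
instance (q : ℕ) : DecidableEq (Idx k q) := by unfold Idx; infer_instance

/-- The tangent lattice of the face indexed by `U`: `ℤ^{[k] ∖ U}`. -/
abbrev Latt (U : Finset (Fin k)) := {i : Fin k // i ∉ U} → ℤ

/-- The projection of tangent lattices attached to an inclusion `U ⊆ U'`. -/
noncomputable def projL {U U' : Finset (Fin k)} (h : U ⊆ U') :
    Latt k U →ₗ[ℤ] Latt k U' :=
  LinearMap.funLeft ℤ ℤ (fun i : {i : Fin k // i ∉ U'} => ⟨i.1, fun hc => i.2 (h hc)⟩)

/-- The multi-tangent coefficient of the face indexed by `U`: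
`F_p = ⋀^p ℤ^{[k]∖U}` (each face of `𝕋^k` is contained only in faces of the same
sedentarity, so the sum defining `F_p` has a single term). -/
abbrev Fp (p : ℕ) (U : Finset (Fin k)) := ↥(⋀[ℤ]^p (Latt k U))

/-- The chain group predual to `C_c^{p,q}(𝕋^k)`. -/
abbrev Mch (p q : ℕ) := ⨁ U : Idx k q, Fp k p U.1

end TropAffine

/-- Sign and component-map data for the cellular complex of `𝕋^k` computing tropical
cohomology with compact support: incidence signs coming from a cellular orientation,
and the maps `⋀^p ℤ^{[k]∖U} → ⋀^p ℤ^{[k]∖U'}` induced by the coordinate projections. -/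
structure CubeData (k p : ℕ) where
  ε : ∀ q : ℕ, TropAffine.Idx k q → TropAffine.Idx k (q + 1) → ℤ
  ε_unit : ∀ q γ δ, δ.1 ⊆ γ.1 → ε q γ δ = 1 ∨ ε q γ δ = -1
  ε_zero : ∀ q γ δ, ¬ δ.1 ⊆ γ.1 → ε q γ δ = 0
  ε_rel : ∀ (q : ℕ) (γ : TropAffine.Idx k q) (δ : TropAffine.Idx k (q + 2)),
      (∑ μ : TropAffine.Idx k (q + 1), ε q γ μ * ε (q + 1) μ δ) = 0
  imap : ∀ {q : ℕ} (γ : TropAffine.Idx k q) (δ : TropAffine.Idx k (q + 1)),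
      δ.1 ⊆ γ.1 → (TropAffine.Fp k p δ.1 →ₗ[ℤ] TropAffine.Fp k p γ.1)
  imap_spec : ∀ {q : ℕ} (γ : TropAffine.Idx k q) (δ : TropAffine.Idx k (q + 1))
      (h : δ.1 ⊆ γ.1) (x : TropAffine.Fp k p δ.1),
      (imap γ δ h x : ExteriorAlgebra ℤ (TropAffine.Latt k γ.1)) =
        ExteriorAlgebra.map (TropAffine.projL k h)
          (x : ExteriorAlgebra ℤ (TropAffine.Latt k δ.1))

namespace TropAffine

variable {k : ℕ}

/-- The predual boundary map. -/
noncomputable def bdry {p : ℕ} (cd : CubeData k p) (q : ℕ) :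
    Mch k p (q + 1) →ₗ[ℤ] Mch k p q :=
  DirectSum.toModule ℤ _ _ fun δ =>
    ∑ γ : Idx k q,
      if h : δ.1 ⊆ γ.1 then
        cd.ε q γ δ •
          ((DirectSum.lof ℤ (Idx k q) (fun γ' => Fp k p γ'.1) γ).comp (cd.imap γ δ h))
      else 0

/-- The cochain groups `C_c^{p,q}(𝕋^k)`. -/
abbrev Cc (p q : ℕ) := Module.Dual ℤ (Mch k p q)

/-- The coboundary of the compactly supported complex. -/
noncomputable def coder {p : ℕ} (cd : CubeData k p) (q : ℕ) :
    Cc (k := k) p q →ₗ[ℤ] Cc (k := k) p (q + 1) :=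
  (bdry cd q).dualMap

/-- The coboundary arriving in degree `q`. -/
noncomputable def coderFrom {p : ℕ} (cd : CubeData k p) :
    ∀ q : ℕ, Cc (k := k) p (q - 1) →ₗ[ℤ] Cc (k := k) p q
  | 0 => 0
  | (q + 1) => coder cd q

/-- Tropical cohomology with compact support `H_c^{p,q}(𝕋^k)`. -/
noncomputable def Hc {p : ℕ} (cd : CubeData k p) (q : ℕ) :=
  ↥(LinearMap.ker (coder cd q)) ⧸
    Submodule.comap (LinearMap.ker (coder cd q)).subtype
      (LinearMap.range (coderFrom cd q))

noncomputable instance {p : ℕ} (cd : CubeData k p) (q : ℕ) : AddCommGroup (Hc cd q) := by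
  unfold Hc; infer_instance

noncomputable instance {p : ℕ} (cd : CubeData k p) (q : ℕ) : Module ℤ (Hc cd q) := by
  unfold Hc; infer_instance

end TropAffine


/-!
For `p < k` the chain complex `Mch k p •` predual to `C_c^{p,•}(𝕋^k)` is the direct sum of
strands, one for each standard generator `e_T` of `⋀^p ℤ^k` (`|T| = p`): the strand of `e_T` is
spanned by the images of `e_T` on the faces whose coordinates at `∞` avoid `T`. Choosing a
coordinate `v ∉ T`, the cone with apex `v` (freeing the coordinate `v`) contracts that strand; the
signs work out because `∂∂ = 0` forces opposite incidence signs around every square of faces.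
Dualising, `H_c^{p,q}(𝕋^k) = 0`.

For `p ≥ k` nothing is needed beyond ranks: `Mch k p q` is free of rank `binom(k,q) binom(q,p)`,
which vanishes unless `p = q = k`, where it is `1`.
-/

namespace exteriorPower

open Set.powersetCard

lemma pairingDual_ιMulti_family_of_ne {R M ι : Type*} [CommRing R] [AddCommGroup M] [Module R M]
    [LinearOrder ι] {n : ℕ} (x : ι → M) (f : ι → Module.Dual R M)
    (h₀ : ∀ ⦃i j⦄, i ≠ j → f i (x j) = 0) {s t : Set.powersetCard ι n} (hst : s ≠ t) :
    pairingDual R M n (ιMulti_family R n f s) (ιMulti_family R n x t) = 0 :=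
  pairingDual_apply_apply_eq_one_zero x f h₀ n _ _ (ofFinEmbEquiv.symm.injective.ne hst)

lemma pairingDual_ιMulti_family_self {R M ι : Type*} [CommRing R] [AddCommGroup M] [Module R M]
    [LinearOrder ι] {n : ℕ} (x : ι → M) (f : ι → Module.Dual R M)
    (h₀ : ∀ ⦃i j⦄, i ≠ j → f i (x j) = 0) (s : Set.powersetCard ι n)
    (h₁ : ∀ i ∈ s, f i (x i) = 1) :
    pairingDual R M n (ιMulti_family R n f s) (ιMulti_family R n x s) = 1 := by
  rw [ιMulti_family, ιMulti_family, pairingDual_ιMulti_ιMulti,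
    ← Matrix.det_one (n := Fin n) (R := R)]
  congr
  ext a b
  rcases eq_or_ne a b with rfl | hab
  · simpa using h₁ _ ((mem_range_ofFinEmbEquiv_symm_iff_mem s _).1 ⟨a, rfl⟩)
  · simpa [Matrix.one_apply_ne hab] using h₀ ((ofFinEmbEquiv.symm s).injective.ne hab.symm)

end exteriorPower

namespace TropAffine

variable {k p q : ℕ}

lemma card_idx : Fintype.card (Idx k q) = k.choose q := by
  change Fintype.card {U : Finset (Fin k) // U.card + q = k} = _
  rw [Fintype.card_subtype]
  rcases le_or_gt q k with hq | hq
  · have : Finset.univ.filter (fun U : Finset (Fin k) => U.card + q = k) =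
        Finset.powersetCard (k - q) Finset.univ := by
      ext U
      simp only [Finset.mem_filter, Finset.mem_univ, true_and, Finset.mem_powersetCard,
        Finset.subset_univ]
      omega
    rw [this, Finset.card_powersetCard, Finset.card_univ, Fintype.card_fin, Nat.choose_symm hq]
  · rw [Nat.choose_eq_zero_of_lt hq, Finset.card_eq_zero, Finset.filter_eq_empty_iff]
    intro U _
    omega

lemma finrank_fp (U : Idx k q) : Module.finrank ℤ (Fp k p U.1) = q.choose p := by
  rw [exteriorPower.finrank_eq, Module.finrank_pi]
  have := U.2
  simp only [Fintype.card_subtype_compl, Fintype.card_coe, Fintype.card_fin]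
  congr 1
  omega

lemma finrank_mch : Module.finrank ℤ (Mch k p q) = k.choose q * q.choose p := by
  simp [Module.finrank_directSum, finrank_fp, card_idx]

lemma subsingleton_mch (h : q < p ∨ k < q) : Subsingleton (Mch k p q) := by
  rw [← Module.finrank_eq_zero_iff_of_free ℤ, finrank_mch]
  rcases h with h | h <;> simp [Nat.choose_eq_zero_of_lt h]

noncomputable def mchTopEquiv : Mch k k k ≃ₗ[ℤ] ℤ :=
  LinearEquiv.ofFinrankEq _ _ (by rw [finrank_mch, Module.finrank_self]; simp)

section Cohomology

variable (cd : CubeData k p)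

lemma coder_apply (φ : Cc (k := k) p q) (x : Mch k p (q + 1)) :
    coder cd q φ x = φ (bdry cd q x) := rfl

lemma subsingleton_hc_iff (q : ℕ) :
    Subsingleton (Hc cd q) ↔ LinearMap.ker (coder cd q) ≤ LinearMap.range (coderFrom cd q) := by
  rw [Hc, Submodule.Quotient.subsingleton_iff, Submodule.comap_subtype_eq_top]

lemma subsingleton_hc_of_subsingleton_mch (q : ℕ) [Subsingleton (Mch k p q)] :
    Subsingleton (Hc cd q) := by
  unfold Hc; infer_instance

lemma subsingleton_hc_of_homotopy (s : ∀ q, Mch k p q →ₗ[ℤ] Mch k p (q + 1))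
    (h₀ : bdry cd 0 ∘ₗ s 0 = LinearMap.id)
    (h : ∀ q, bdry cd (q + 1) ∘ₗ s (q + 1) + s q ∘ₗ bdry cd q = LinearMap.id) (q : ℕ) :
    Subsingleton (Hc cd q) := by
  rw [subsingleton_hc_iff]
  intro φ hφ
  rw [LinearMap.mem_ker] at hφ
  cases q with
  | zero =>
    suffices φ = 0 by rw [this]; exact Submodule.zero_mem _
    refine LinearMap.ext fun x => ?_
    rw [← LinearMap.id_apply (R := ℤ) x, ← h₀, LinearMap.comp_apply, ← coder_apply, hφ]
    rfl
  | succ q =>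
    refine ⟨(s q).dualMap φ, LinearMap.ext fun x => ?_⟩
    conv_rhs => rw [← LinearMap.id_apply (R := ℤ) x, ← h q]
    rw [LinearMap.add_apply, map_add, LinearMap.comp_apply, ← coder_apply, hφ]
    simp [coderFrom, coder_apply]

noncomputable def hcEquivCc (q : ℕ) (h₁ : LinearMap.range (coderFrom cd q) = ⊥)
    (h₂ : coder cd q = 0) : Hc cd q ≃ₗ[ℤ] Cc (k := k) p q :=
  (Submodule.quotEquivOfEqBot _ (by rw [h₁, Submodule.comap_bot, Submodule.ker_subtype])).trans
    (LinearEquiv.ofTop _ (by rw [h₂, LinearMap.ker_zero]))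

end Cohomology

section Wedges

open exteriorPower Set.powersetCard

/-- The image of the standard basis vector `e_i` of `ℤ^k` in `Latt k U = ℤ^{[k] ∖ U}`. -/
def basisVec (U : Finset (Fin k)) (i : Fin k) : Latt k U := fun j => if j.1 = i then 1 else 0

noncomputable def coordFun (U : Finset (Fin k)) (i : Fin k) : Module.Dual ℤ (Latt k U) :=
  if h : i ∈ U then 0 else LinearMap.proj (⟨i, h⟩ : {j : Fin k // j ∉ U})

lemma basisVec_eq_zero {U : Finset (Fin k)} {i : Fin k} (h : i ∈ U) : basisVec U i = 0 := by
  funext j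
  simp [basisVec, show j.1 ≠ i from fun hji => j.2 (hji ▸ h)]

lemma span_range_basisVec (U : Finset (Fin k)) :
    Submodule.span ℤ (Set.range (basisVec U)) = ⊤ := by
  refine eq_top_mono (Submodule.span_mono ?_) (Pi.basisFun ℤ {i : Fin k // i ∉ U}).span_eq
  rintro _ ⟨j, rfl⟩
  refine ⟨j.1, funext fun j' => ?_⟩
  simp [basisVec, Pi.single_apply, Subtype.ext_iff]

lemma coordFun_basisVec (U : Finset (Fin k)) (i j : Fin k) :
    coordFun U i (basisVec U j) = if i = j ∧ i ∉ U then 1 else 0 := by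
  by_cases h : i ∈ U
  · simp [coordFun, h]
  · simp [coordFun, h, basisVec]

/-- `e_T = e_{t₁} ∧ ⋯ ∧ e_{tₚ}` for `T = {t₁ < ⋯ < tₚ}`. -/
noncomputable def wedge (U : Finset (Fin k)) (T : Set.powersetCard (Fin k) p) : Fp k p U :=
  ιMulti_family ℤ p (basisVec U) T

/-- The coefficient of `e_T`, i.e. the `T`-minor. -/
noncomputable def wedgeCoord (U : Finset (Fin k)) (T : Set.powersetCard (Fin k) p) :
    Module.Dual ℤ (Fp k p U) :=
  pairingDual ℤ (Latt k U) p (ιMulti_family ℤ p (coordFun U) T)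

lemma wedge_eq_zero {U : Finset (Fin k)} {T : Set.powersetCard (Fin k) p} {i : Fin k}
    (hiT : i ∈ T) (hiU : i ∈ U) : wedge U T = 0 := by
  obtain ⟨a, ha⟩ := (mem_range_ofFinEmbEquiv_symm_iff_mem T i).2 hiT
  exact (ιMulti ℤ p).map_coord_zero a (by simp [ha, basisVec_eq_zero hiU])

lemma span_range_wedge (U : Finset (Fin k)) :
    Submodule.span ℤ (Set.range (wedge U : Set.powersetCard (Fin k) p → Fp k p U)) = ⊤ :=
  ιMulti_family_span_of_span ℤ (span_range_basisVec U)

lemma wedgeCoord_wedge {U : Finset (Fin k)} {S : Set.powersetCard (Fin k) p}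
    (hS : ∀ i ∈ S, i ∉ U) (T : Set.powersetCard (Fin k) p) :
    wedgeCoord U T (wedge U S) = if S = T then 1 else 0 := by
  have h₀ : ∀ ⦃i j⦄, i ≠ j → coordFun U i (basisVec U j) = 0 := fun i j hij => by
    simp [coordFun_basisVec, hij]
  split_ifs with h
  · subst h
    exact pairingDual_ιMulti_family_self _ _ h₀ S fun i hi => by simp [coordFun_basisVec, hS i hi]
  · exact pairingDual_ιMulti_family_of_ne _ _ h₀ (Ne.symm h)

lemma imap_wedge (cd : CubeData k p) {γ : Idx k q} {δ : Idx k (q + 1)} (h : δ.1 ⊆ γ.1)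
    (T : Set.powersetCard (Fin k) p) : cd.imap γ δ h (wedge δ.1 T) = wedge γ.1 T := by
  ext
  rw [cd.imap_spec]
  simp only [wedge, ιMulti_family_apply_coe, ExteriorAlgebra.ιMulti_family,
    ExteriorAlgebra.map_apply_ιMulti]
  rfl

end Wedges

namespace Idx

lemma eq_of_subset {γ γ' : Idx k q} (h : γ.1 ⊆ γ'.1) : γ = γ' :=
  Subtype.ext (Finset.eq_of_subset_of_card_le h (by have := γ.2; have := γ'.2; omega))

/-- The face of one dimension less obtained by sending the coordinate `w` to `∞`. -/
def insert (δ : Idx k (q + 1)) (w : Fin k) (hw : w ∉ δ.1) : Idx k q :=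
  ⟨Insert.insert w δ.1, by rw [Finset.card_insert_of_notMem hw]; have := δ.2; omega⟩

/-- The face of one dimension more obtained by freeing the coordinate `v`. -/
def erase (γ : Idx k q) (v : Fin k) (hv : v ∈ γ.1) : Idx k (q + 1) :=
  ⟨γ.1.erase v, by
    rw [Finset.card_erase_of_mem hv]; have := γ.2; have := Finset.card_pos.2 ⟨v, hv⟩; omega⟩

variable {v w u : Fin k}

lemma mem_insert {δ : Idx k (q + 1)} {hw : w ∉ δ.1} : u ∈ (δ.insert w hw).1 ↔ u = w ∨ u ∈ δ.1 :=
  Finset.mem_insert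

lemma mem_erase {γ : Idx k q} {hv : v ∈ γ.1} : u ∈ (γ.erase v hv).1 ↔ u ≠ v ∧ u ∈ γ.1 :=
  Finset.mem_erase

lemma coe_eq_univ (γ : Idx k 0) : γ.1 = Finset.univ :=
  Finset.eq_univ_of_card _ (by have := γ.2; simp only [Fintype.card_fin]; omega)

lemma insert_erase (γ : Idx k q) (hv : v ∈ γ.1) :
    (γ.erase v hv).insert v (Finset.notMem_erase v _) = γ :=
  Subtype.ext (Finset.insert_erase hv)

lemma erase_insert (δ : Idx k (q + 1)) (hw : w ∉ δ.1) :
    (δ.insert w hw).erase w (Finset.mem_insert_self w _) = δ :=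
  Subtype.ext (Finset.erase_insert hw)

lemma erase_insert_of_ne (δ : Idx k (q + 1)) (hv : v ∈ δ.1) (hw : w ∉ δ.1) :
    (δ.insert w hw).erase v (Finset.mem_insert_of_mem hv) =
      (δ.erase v hv).insert w (fun h => hw (Finset.mem_of_mem_erase h)) :=
  Subtype.ext (Finset.erase_insert_of_ne (fun h => hw (h ▸ hv)))

end Idx

end TropAffine

namespace CubeData

open TropAffine

variable {k p q : ℕ} (cd : CubeData k p)

/-- Faces containing `δ` in codimension one are the `δ.insert w` for `w ∉ δ`. -/
lemma sum_ε_smul {M : Type*} [AddCommGroup M] [Module ℤ M]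
    (δ : Idx k (q + 1)) (f : Idx k q → M) :
    ∑ γ, cd.ε q γ δ • f γ =
      ∑ w, if hw : w ∈ δ.1 then 0 else cd.ε q (δ.insert w hw) δ • f (δ.insert w hw) := by
  symm
  refine Finset.sum_bij_ne_zero (fun w _ hne => δ.insert w fun hw => hne (dif_pos hw))
    (fun _ _ _ => Finset.mem_univ _) ?_ ?_ ?_
  · intro w₁ _ h₁ w₂ _ h₂ heq
    have h : w₁ ∈ Insert.insert w₂ δ.1 := by
      rw [← show (Insert.insert w₁ δ.1 : Finset (Fin k)) = Insert.insert w₂ δ.1 from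
        congrArg Subtype.val heq]
      exact Finset.mem_insert_self w₁ δ.1
    exact (Finset.mem_insert.1 h).resolve_right fun hw => h₁ (dif_pos hw)
  · intro γ _ hne
    have hsub : δ.1 ⊆ γ.1 := by
      by_contra h
      exact hne (by rw [cd.ε_zero q γ δ h, zero_smul])
    obtain ⟨w, hw, hγ⟩ := Finset.exists_eq_insert_iff.2 ⟨hsub, by have := δ.2; have := γ.2; omega⟩
    have hne' : (if h : w ∈ δ.1 then 0 else cd.ε q (δ.insert w h) δ • f (δ.insert w h)) ≠ 0 := by
      rwa [dif_neg hw, show δ.insert w hw = γ from Subtype.ext hγ]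
    exact ⟨w, Finset.mem_univ _, hne', Subtype.ext hγ⟩
  · intro w _ hne
    rw [dif_neg fun hw => hne (dif_pos hw)]

lemma subset_of_ε_ne_zero {γ : Idx k q} {δ : Idx k (q + 1)} (h : cd.ε q γ δ ≠ 0) : δ.1 ⊆ γ.1 :=
  not_imp_comm.1 (cd.ε_zero q γ δ) h

lemma ε_mul_self {γ : Idx k q} {δ : Idx k (q + 1)} (h : δ.1 ⊆ γ.1) :
    cd.ε q γ δ * cd.ε q γ δ = 1 := by
  rcases cd.ε_unit q γ δ h with h | h <;> simp [h]

/-- `∂∂ = 0` on the square `U.erase v ⊂ U, (U.erase v).insert w ⊂ U.insert w` forces the two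
ways around it to carry opposite signs. -/
lemma ε_square {v w : Fin k} (U : Idx k (q + 1)) (hv : v ∈ U.1) (hw : w ∉ U.1) :
    cd.ε (q + 1) U (U.erase v hv) *
        cd.ε (q + 1) ((U.erase v hv).insert w fun h => hw (Finset.mem_of_mem_erase h))
          (U.erase v hv) +
      cd.ε q (U.insert w hw) U *
        cd.ε q (U.insert w hw) ((U.erase v hv).insert w fun h => hw (Finset.mem_of_mem_erase h))
      = 0 := by
  set δ := U.erase v hv
  set γ := δ.insert w fun h => hw (Finset.mem_of_mem_erase h)
  set β := U.insert w hw
  have hrel := cd.ε_rel q β δ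
  rw [Fintype.sum_eq_add U γ (fun h => hw (h ▸ Finset.mem_insert_self w _))] at hrel
  · have ha := cd.ε_mul_self (γ := β) (δ := U) (Finset.subset_insert w U.1)
    have hd := cd.ε_mul_self (γ := γ) (δ := δ) (Finset.subset_insert w δ.1)
    linear_combination (cd.ε q β U * cd.ε (q + 1) γ δ) * hrel
      - (cd.ε (q + 1) U δ * cd.ε (q + 1) γ δ) * ha - (cd.ε q β U * cd.ε q β γ) * hd
  · rintro μ ⟨hμU, hμγ⟩
    by_contra hne
    have hμβ := cd.subset_of_ε_ne_zero (left_ne_zero_of_mul hne)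
    have hδμ := cd.subset_of_ε_ne_zero (right_ne_zero_of_mul hne)
    by_cases hvμ : v ∈ μ.1
    · refine hμU (Idx.eq_of_subset ?_).symm
      rw [← Idx.insert_erase U hv]
      exact Finset.insert_subset hvμ hδμ
    · have hγ : γ = β.erase v (Finset.mem_insert_of_mem hv) := (Idx.erase_insert_of_ne U hv hw).symm
      exact hμγ (Idx.eq_of_subset (hγ ▸ Finset.subset_erase.2 ⟨hμβ, hvμ⟩))

end CubeData

namespace TropAffine

section Contraction

variable {k p q : ℕ} (cd : CubeData k p) (T : Set.powersetCard (Fin k) p)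

noncomputable def chainWedge (U : Idx k q) : Mch k p q :=
  DirectSum.lof ℤ (Idx k q) (fun γ => Fp k p γ.1) U (wedge U.1 T)

variable {T} in
lemma chainWedge_eq_zero {U : Idx k q} {i : Fin k} (hiT : i ∈ T) (hiU : i ∈ U.1) :
    chainWedge T U = 0 := by
  rw [chainWedge, wedge_eq_zero hiT hiU, map_zero]

lemma mch_hom_ext {N : Type*} [AddCommGroup N] [Module ℤ N] {f g : Mch k p q →ₗ[ℤ] N}
    (h : ∀ T U, f (chainWedge T U) = g (chainWedge T U)) : f = g :=
  DirectSum.linearMap_ext ℤ fun U => LinearMap.ext_on (span_range_wedge U.1) <| by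
    rintro _ ⟨T, rfl⟩
    exact h T U

lemma bdry_chainWedge (δ : Idx k (q + 1)) :
    bdry cd q (chainWedge T δ) = ∑ γ, cd.ε q γ δ • chainWedge T γ := by
  rw [chainWedge, bdry, DirectSum.toModule_lof, LinearMap.sum_apply]
  refine Finset.sum_congr rfl fun γ _ => ?_
  split_ifs with h
  · rw [LinearMap.smul_apply, LinearMap.comp_apply, imap_wedge]
    rfl
  · rw [cd.ε_zero q γ δ h, zero_smul, LinearMap.zero_apply]

noncomputable def cone (v : Fin k) (U : Idx k q) : Mch k p (q + 1) :=
  if hv : v ∈ U.1 then cd.ε q U (U.erase v hv) • chainWedge T (U.erase v hv) else 0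

variable {v : Fin k}

lemma cone_of_mem {U : Idx k q} (hv : v ∈ U.1) :
    cone cd T v U = cd.ε q U (U.erase v hv) • chainWedge T (U.erase v hv) :=
  dif_pos hv

lemma cone_of_notMem {U : Idx k q} (hv : v ∉ U.1) : cone cd T v U = 0 :=
  dif_neg hv

lemma bdry_cone_zero (U : Idx k 0) : bdry cd 0 (cone cd T v U) = chainWedge T U := by
  have hv : v ∈ U.1 := U.coe_eq_univ ▸ Finset.mem_univ v
  rw [cone_of_mem cd T hv, map_smul, bdry_chainWedge, cd.sum_ε_smul, Finset.sum_eq_single v]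
  · rw [dif_neg fun h => (Idx.mem_erase.1 h).1 rfl, Idx.insert_erase, smul_smul,
      cd.ε_mul_self (Finset.erase_subset v U.1), one_smul]
  · intro w _ hwv
    rw [dif_pos (Idx.mem_erase.2 ⟨hwv, U.coe_eq_univ ▸ Finset.mem_univ w⟩)]
  · exact fun h => absurd (Finset.mem_univ v) h

lemma bdry_cone_add_sum_cone (U : Idx k (q + 1)) :
    bdry cd (q + 1) (cone cd T v U) + ∑ γ, cd.ε q γ U • cone cd T v γ = chainWedge T U := by
  rw [cd.sum_ε_smul]
  by_cases hv : v ∈ U.1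
  · rw [cone_of_mem cd T hv, map_smul, bdry_chainWedge, cd.sum_ε_smul, Finset.smul_sum,
      ← Finset.sum_add_distrib, Finset.sum_eq_single v]
    · rw [dif_neg fun h => (Idx.mem_erase.1 h).1 rfl, dif_pos hv, add_zero, Idx.insert_erase,
        smul_smul, cd.ε_mul_self (Finset.erase_subset v U.1), one_smul]
    · intro w _ hwv
      by_cases hw : w ∈ U.1
      · rw [dif_pos (Idx.mem_erase.2 ⟨hwv, hw⟩), dif_pos hw, smul_zero, add_zero]
      · rw [dif_neg fun h => hw (Idx.mem_erase.1 h).2, dif_neg hw,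
          cone_of_mem cd T (Idx.mem_insert.2 (Or.inr hv)), Idx.erase_insert_of_ne U hv hw,
          smul_smul, smul_smul, ← add_smul, cd.ε_square U hv hw, zero_smul]
    · exact fun h => absurd (Finset.mem_univ v) h
  · rw [cone_of_notMem cd T hv, map_zero, zero_add, Finset.sum_eq_single v]
    · rw [dif_neg hv, cone_of_mem cd T (Idx.mem_insert.2 (Or.inl rfl)), Idx.erase_insert,
        smul_smul, cd.ε_mul_self (Finset.subset_insert v U.1), one_smul]
    · intro w _ hwv
      by_cases hw : w ∈ U.1
      · rw [dif_pos hw]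
      · rw [dif_neg hw, cone_of_notMem cd T, smul_zero]
        exact fun h => hv ((Idx.mem_insert.1 h).resolve_left (Ne.symm hwv))
    · exact fun h => absurd (Finset.mem_univ v) h

noncomputable def freeCoord (hp : p < k) : Fin k :=
  (Finset.exists_mem_notMem_of_card_lt_card (s := T.1) (t := Finset.univ)
    (by simpa [Set.powersetCard.card_eq T] using hp)).choose

lemma freeCoord_notMem (hp : p < k) : freeCoord T hp ∉ T :=
  (Finset.exists_mem_notMem_of_card_lt_card (s := T.1) (t := Finset.univ)
    (by simpa [Set.powersetCard.card_eq T] using hp)).choose_spec.2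

noncomputable def contraction (hp : p < k) (q : ℕ) : Mch k p q →ₗ[ℤ] Mch k p (q + 1) :=
  DirectSum.toModule ℤ _ _ fun U =>
    ∑ T, (wedgeCoord U.1 T).smulRight (cone cd T (freeCoord T hp) U)

lemma contraction_chainWedge (hp : p < k) (U : Idx k q) :
    contraction cd hp q (chainWedge T U) = cone cd T (freeCoord T hp) U := by
  by_cases hTU : ∀ i ∈ T, i ∉ U.1
  · rw [contraction, chainWedge, DirectSum.toModule_lof, LinearMap.sum_apply,
      Finset.sum_eq_single T]
    · rw [LinearMap.smulRight_apply, wedgeCoord_wedge hTU, if_pos rfl, one_smul]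
    · intro T' _ hT'
      rw [LinearMap.smulRight_apply, wedgeCoord_wedge hTU, if_neg (Ne.symm hT'), zero_smul]
    · exact fun h => absurd (Finset.mem_univ T) h
  · push Not at hTU
    obtain ⟨i, hiT, hiU⟩ := hTU
    rw [chainWedge_eq_zero hiT hiU, map_zero]
    by_cases hv : freeCoord T hp ∈ U.1
    · have hiv : i ≠ freeCoord T hp := fun h => freeCoord_notMem T hp (h ▸ hiT)
      rw [cone_of_mem cd T hv, chainWedge_eq_zero hiT (Idx.mem_erase.2 ⟨hiv, hiU⟩), smul_zero]
    · rw [cone_of_notMem cd T hv]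

lemma bdry_comp_contraction_zero (hp : p < k) :
    bdry cd 0 ∘ₗ contraction cd hp 0 = LinearMap.id := by
  refine mch_hom_ext (N := Mch k p _) fun T U => ?_
  rw [LinearMap.comp_apply, contraction_chainWedge, bdry_cone_zero, LinearMap.id_apply]

lemma bdry_comp_contraction_add (hp : p < k) (q : ℕ) :
    bdry cd (q + 1) ∘ₗ contraction cd hp (q + 1) + contraction cd hp q ∘ₗ bdry cd q =
      LinearMap.id := by
  refine mch_hom_ext (N := Mch k p _) fun T U => ?_
  rw [LinearMap.add_apply, LinearMap.comp_apply, LinearMap.comp_apply, contraction_chainWedge,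
    bdry_chainWedge, map_sum]
  simp only [map_zsmul, contraction_chainWedge]
  exact bdry_cone_add_sum_cone cd T U

end Contraction

variable {k : ℕ} (cd : CubeData k k)

lemma coder_self_eq_zero : coder cd k = 0 :=
  have : Subsingleton (Mch k k (k + 1)) := subsingleton_mch (Or.inr (Nat.lt_succ_self k))
  Subsingleton.elim _ _

lemma range_coderFrom_self_eq_bot : LinearMap.range (coderFrom cd k) = ⊥ := by
  cases k with
  | zero => exact LinearMap.range_zero
  | succ m =>
    have : Subsingleton (Mch (m + 1) (m + 1) m) := subsingleton_mch (Or.inl (Nat.lt_succ_self m))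
    exact LinearMap.range_eq_bot.2 (Subsingleton.elim (coder cd m) 0)

noncomputable def hcTopEquiv : Hc cd k ≃ₗ[ℤ] ℤ :=
  (hcEquivCc cd k (range_coderFrom_self_eq_bot cd) (coder_self_eq_zero cd)).trans
    ((mchTopEquiv (k := k)).symm.dualMap.trans (LinearMap.ringLmapEquivSelf ℤ ℤ ℤ))

end TropAffine

theorem compact_support_cohomology_Tk_general (k : ℕ) :
    (∀ (p q : ℕ) (cd : CubeData k p), (p, q) ≠ (k, k) →
      Subsingleton (TropAffine.Hc cd q)) ∧
    (∀ cd : CubeData k k, Nonempty (TropAffine.Hc cd k ≃ₗ[ℤ] ℤ)) := by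
  refine ⟨fun p q cd hpq => ?_, fun cd => ⟨TropAffine.hcTopEquiv cd⟩⟩
  rcases lt_or_ge p k with hp | hp
  · exact TropAffine.subsingleton_hc_of_homotopy cd (TropAffine.contraction cd hp)
      (TropAffine.bdry_comp_contraction_zero cd hp) (TropAffine.bdry_comp_contraction_add cd hp) q
  · have : Subsingleton (TropAffine.Mch k p q) := TropAffine.subsingleton_mch <| by
      rw [Ne, Prod.mk.injEq] at hpq
      omega
    exact TropAffine.subsingleton_hc_of_subsingleton_mch cd q

/-- for `k ≥ 1`, the tropical cohomology with compact support
`H_c^{p,q}(𝕋^k)` of tropical affine space vanishes for `(p,q) ≠ (k,k)`, and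
`H_c^{k,k}(𝕋^k) ≅ ℤ`. -/
theorem compact_support_cohomology_Tk (k : ℕ) (hk : 1 ≤ k) :
    (∀ (p q : ℕ) (cd : CubeData k p), (p, q) ≠ (k, k) →
      Subsingleton (TropAffine.Hc cd q)) ∧
    (∀ cd : CubeData k k, Nonempty (TropAffine.Hc cd k ≃ₗ[ℤ] ℤ)) :=
  compact_support_cohomology_Tk_general k
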